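/- Let N ∈ ℕ with N ≥ 1 and L, R > 0, and define ξ : ℝ → ℝ by ξ(x) = max_{i=0,…,N} ( (2i/N − 1) L x + (2LR/(N(N+1))) i(N−i) ). Then ξ is convex and L-Lipschitz continuous, and for each i ∈ {1,…,N}, setting x_i = (2i/(N+1) − 1) R, the subdifferential of ξ at x_i is the interval ∂ξ(x_i) = [ (2(i−1)/N − 1) L , (2i/N − 1) L ]; moreover ξ is differentiable at every point of ℝ ∖ {x_1, …, x_N}. -/

import Mathlib

/-!
Write `ℓ_j(x) = a_j x + b_j` for the `j`-th affine piece of `ξ` and `x_k` for the `k`-th kink.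
The identity `ℓ_j(x_k) = ℓ_k(x_k) - (2LR/(N(N+1))) (k - j)(k - j - 1)` shows that at `x_k` the
pieces `ℓ_{k-1}` and `ℓ_k` attain the maximum, since `(k - j)(k - j - 1) ≥ 0` for integers, with
equality at `j ∈ {k - 1, k}`. As the slopes `a_j` increase with `j`, `ξ` therefore coincides with
`ℓ_k` on `[x_k, x_{k+1}]`. Everything follows: `ξ` is a maximum of affine maps of slope at most
`L` in absolute value, it is affine near every point other than a kink, and at `x_i` the two
supporting lines `ℓ_{i-1}`, `ℓ_i` are exact on the neighbouring cells, which pins the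
subdifferential down to `[a_{i-1}, a_i]`.
-/

/-- The piecewise affine convex function
`ξ(x) = max_{i=0..N} ((2i/N - 1) L x + (2LR/(N(N+1))) i(N-i))`. -/
noncomputable def zeta (N : ℕ) (L R : ℝ) : ℝ → ℝ := fun x =>
  (Finset.range (N + 1)).sup' Finset.nonempty_range_add_one fun i =>
    (2 * (i : ℝ) / N - 1) * L * x + 2 * L * R / (N * (N + 1)) * i * ((N : ℝ) - i)

/-- The subdifferential of a function `f : ℝ → ℝ` at `x`. -/
def subdiffR (f : ℝ → ℝ) (x : ℝ) : Set ℝ :=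
  {g | ∀ y, f x + g * (y - x) ≤ f y}

open Filter Topology

theorem ConvexOn.finset_sup' {ι 𝕜 E β : Type*} [Semiring 𝕜] [PartialOrder 𝕜]
    [AddCommMonoid E] [AddCommMonoid β] [LinearOrder β] [IsOrderedAddMonoid β]
    [SMul 𝕜 E] [Module 𝕜 β] [PosSMulStrictMono 𝕜 β] {s : Set E} {t : Finset ι}
    (ht : t.Nonempty) {f : ι → E → β}
    (hf : ∀ i ∈ t, ConvexOn 𝕜 s (f i)) : ConvexOn 𝕜 s (t.sup' ht f) :=
  Finset.sup'_induction ht f (fun _ h₁ _ h₂ => h₁.sup h₂) hf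

theorem LipschitzWith.finset_sup' {ι α : Type*} [PseudoEMetricSpace α] {K : NNReal}
    {t : Finset ι} (ht : t.Nonempty) {f : ι → α → ℝ}
    (hf : ∀ i ∈ t, LipschitzWith K (f i)) : LipschitzWith K (t.sup' ht f) :=
  Finset.sup'_induction ht f (fun _ h₁ _ h₂ => by
    have h := h₁.max h₂
    rw [max_self] at h
    exact h) hf

theorem lipschitzWith_mul_add {a K : ℝ} (b : ℝ) (h : |a| ≤ K) :
    LipschitzWith K.toNNReal fun x : ℝ => a * x + b := by
  refine LipschitzWith.of_dist_le_mul fun x y => ?_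
  rw [Real.dist_eq, Real.dist_eq, add_sub_add_right_eq_sub, ← mul_sub, abs_mul,
    Real.coe_toNNReal K ((abs_nonneg a).trans h)]
  gcongr

theorem subdiffR_eq_Icc {f : ℝ → ℝ} {p q r s t : ℝ} (hq : q < p) (hr : p < r)
    (hs : s ∈ subdiffR f p) (ht : t ∈ subdiffR f p)
    (hfq : f q = f p + s * (q - p)) (hfr : f r = f p + t * (r - p)) :
    subdiffR f p = Set.Icc s t := by
  ext g
  constructor
  · intro hg
    have hgq := hg q
    have hgr := hg r
    constructor
    · exact (mul_le_mul_right_of_neg (sub_neg.2 hq)).1 (by linarith)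
    · exact le_of_mul_le_mul_right (by linarith) (sub_pos.2 hr)
  · rintro ⟨hsg, hgt⟩ y
    rcases le_total y p with hy | hy
    · have := mul_le_mul_of_nonpos_right hsg (sub_nonpos.2 hy)
      linarith [hs y]
    · have := mul_le_mul_of_nonneg_right hgt (sub_nonneg.2 hy)
      linarith [ht y]

theorem exists_cell_of_forall_ne {α : Type*} [LinearOrder α] (p : ℕ → α) {x : α} (n : ℕ)
    (hx : ∀ i, 1 ≤ i → i ≤ n → x ≠ p i) :
    ∃ k ≤ n, (k = 0 ∨ p k < x) ∧ (k = n ∨ x < p (k + 1)) := by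
  induction n with
  | zero => exact ⟨0, le_rfl, Or.inl rfl, Or.inl rfl⟩
  | succ n ih =>
    obtain ⟨k, hkn, hleft, hright⟩ := ih fun i hi hin => hx i hi (by omega)
    rcases hright with rfl | hright
    · rcases (hx (k + 1) le_add_self le_rfl).lt_or_gt with hlt | hgt
      · exact ⟨k, by omega, hleft, Or.inr hlt⟩
      · exact ⟨k + 1, le_rfl, Or.inr hgt, Or.inl rfl⟩
    · exact ⟨k, by omega, hleft, Or.inr hright⟩

theorem Int.mul_sub_one_nonneg (n : ℤ) : 0 ≤ n * (n - 1) := by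
  rcases le_or_gt n 0 with h | h <;> nlinarith

section Zeta

variable {N : ℕ} {L R : ℝ}

noncomputable def zetaSlope (N : ℕ) (L : ℝ) (j : ℕ) : ℝ := (2 * (j : ℝ) / N - 1) * L

noncomputable def zetaPiece (N : ℕ) (L R : ℝ) (j : ℕ) (x : ℝ) : ℝ :=
  zetaSlope N L j * x + 2 * L * R / (N * (N + 1)) * j * ((N : ℝ) - j)

noncomputable def zetaKink (N : ℕ) (R : ℝ) (k : ℕ) : ℝ := (2 * (k : ℝ) / (N + 1) - 1) * R

theorem zeta_eq_finset_sup' (N : ℕ) (L R : ℝ) :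
    zeta N L R =
      (Finset.range (N + 1)).sup' Finset.nonempty_range_add_one (zetaPiece N L R) := by
  ext x
  rw [Finset.sup'_apply]
  rfl

theorem zetaPiece_le_zeta {j : ℕ} (hj : j ≤ N) (x : ℝ) : zetaPiece N L R j x ≤ zeta N L R x :=
  Finset.le_sup' (fun i => zetaPiece N L R i x) (Finset.mem_range.2 (Nat.lt_succ_of_le hj))

theorem zetaPiece_eq_add (j : ℕ) (x c : ℝ) :
    zetaPiece N L R j x = zetaPiece N L R j c + zetaSlope N L j * (x - c) := by
  simp only [zetaPiece]
  ring

theorem zetaSlope_mono (hL : 0 ≤ L) : Monotone (zetaSlope N L) := by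
  intro j k hjk
  unfold zetaSlope
  gcongr

theorem abs_zetaSlope_le (hN : N ≠ 0) (hL : 0 ≤ L) {j : ℕ} (hj : j ≤ N) :
    |zetaSlope N L j| ≤ L := by
  have hN' : (0 : ℝ) < N := by positivity
  have hjN : (j : ℝ) ≤ N := by exact_mod_cast hj
  rw [zetaSlope, abs_mul, abs_of_nonneg hL]
  refine mul_le_of_le_one_left hL (abs_le.2 ⟨?_, ?_⟩)
  · have : 0 ≤ 2 * (j : ℝ) / N := by positivity
    linarith
  · have : 2 * (j : ℝ) / N ≤ 2 := by rw [div_le_iff₀ hN']; linarith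
    linarith

theorem zetaKink_lt_succ (hR : 0 < R) (k : ℕ) : zetaKink N R k < zetaKink N R (k + 1) := by
  unfold zetaKink
  gcongr
  linarith

theorem zetaPiece_zetaKink_add (hN : N ≠ 0) (j k : ℕ) :
    zetaPiece N L R j (zetaKink N R k) + 2 * L * R / (N * (N + 1)) * ((k - j) * (k - j - 1)) =
      zetaPiece N L R k (zetaKink N R k) := by
  simp only [zetaPiece, zetaSlope, zetaKink]
  field_simp
  ring

theorem zetaPiece_le_at_zetaKink (hN : N ≠ 0) (hL : 0 ≤ L) (hR : 0 ≤ R) {j k m : ℕ}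
    (hm : m = k ∨ m + 1 = k) :
    zetaPiece N L R j (zetaKink N R k) ≤ zetaPiece N L R m (zetaKink N R k) := by
  have hj := zetaPiece_zetaKink_add (L := L) (R := R) hN j k
  have hm' := zetaPiece_zetaKink_add (L := L) (R := R) hN m k
  have hmk : ((k : ℝ) - m) * ((k : ℝ) - m - 1) = 0 := by
    rcases hm with rfl | rfl
    · ring
    · push_cast; ring
  have hjk : 0 ≤ ((k : ℝ) - j) * ((k : ℝ) - j - 1) := by
    exact_mod_cast Int.mul_sub_one_nonneg ((k : ℤ) - j)
  rw [hmk, mul_zero, add_zero] at hm'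
  linarith [mul_nonneg (by positivity : 0 ≤ 2 * L * R / (N * (N + 1))) hjk]

theorem zetaPiece_le_of_le_of_zetaKink_le (hN : N ≠ 0) (hL : 0 ≤ L) (hR : 0 ≤ R) {j k : ℕ}
    (hjk : j ≤ k) {x : ℝ} (hx : zetaKink N R k ≤ x) :
    zetaPiece N L R j x ≤ zetaPiece N L R k x := by
  rw [zetaPiece_eq_add j x (zetaKink N R k), zetaPiece_eq_add k x (zetaKink N R k)]
  exact add_le_add (zetaPiece_le_at_zetaKink hN hL hR (Or.inl rfl))
    (mul_le_mul_of_nonneg_right (zetaSlope_mono hL hjk) (sub_nonneg.2 hx))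

theorem zetaPiece_le_of_ge_of_le_zetaKink (hN : N ≠ 0) (hL : 0 ≤ L) (hR : 0 ≤ R) {j k : ℕ}
    (hkj : k ≤ j) {x : ℝ} (hx : x ≤ zetaKink N R (k + 1)) :
    zetaPiece N L R j x ≤ zetaPiece N L R k x := by
  rw [zetaPiece_eq_add j x (zetaKink N R (k + 1)),
    zetaPiece_eq_add k x (zetaKink N R (k + 1))]
  exact add_le_add (zetaPiece_le_at_zetaKink hN hL hR (Or.inr rfl))
    (mul_le_mul_of_nonpos_right (zetaSlope_mono hL hkj) (sub_nonpos.2 hx))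

/-- The disjunctions encode the conventions `x_0 = -∞` and `x_{N+1} = +∞`. -/
theorem zeta_eq_zetaPiece (hN : N ≠ 0) (hL : 0 ≤ L) (hR : 0 ≤ R) {k : ℕ} (hk : k ≤ N) {x : ℝ}
    (hleft : k = 0 ∨ zetaKink N R k ≤ x) (hright : k = N ∨ x ≤ zetaKink N R (k + 1)) :
    zeta N L R x = zetaPiece N L R k x := by
  refine le_antisymm (Finset.sup'_le _ _ fun j hj => ?_) (zetaPiece_le_zeta hk x)
  have hjN : j ≤ N := Nat.lt_succ_iff.1 (Finset.mem_range.1 hj)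
  rcases le_total j k with hjk | hkj
  · rcases hleft with rfl | hleft
    · obtain rfl := Nat.le_zero.1 hjk
      exact le_rfl
    · exact zetaPiece_le_of_le_of_zetaKink_le hN hL hR hjk hleft
  · rcases hright with rfl | hright
    · obtain rfl := le_antisymm hjN hkj
      exact le_rfl
    · exact zetaPiece_le_of_ge_of_le_zetaKink hN hL hR hkj hright

theorem zetaSlope_mem_subdiffR {k : ℕ} (hk : k ≤ N) {x : ℝ}
    (hx : zeta N L R x = zetaPiece N L R k x) : zetaSlope N L k ∈ subdiffR (zeta N L R) x := by
  intro y
  rw [hx, ← zetaPiece_eq_add]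
  exact zetaPiece_le_zeta hk y

theorem subdiffR_zeta_zetaKink (hN : N ≠ 0) (hL : 0 ≤ L) (hR : 0 < R) {m : ℕ}
    (hm : m + 1 ≤ N) :
    subdiffR (zeta N L R) (zetaKink N R (m + 1)) =
      Set.Icc (zetaSlope N L m) (zetaSlope N L (m + 1)) := by
  have hlt := zetaKink_lt_succ (N := N) hR
  have hcell {k : ℕ} (hk : k ≤ N) {x : ℝ} (h₁ : zetaKink N R k ≤ x)
      (h₂ : x ≤ zetaKink N R (k + 1)) : zeta N L R x = zetaPiece N L R k x :=
    zeta_eq_zetaPiece hN hL hR.le hk (Or.inr h₁) (Or.inr h₂)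
  have hleft := hcell (k := m) (by omega) (hlt m).le le_rfl
  have hright := hcell hm le_rfl (hlt (m + 1)).le
  refine subdiffR_eq_Icc (hlt m) (hlt (m + 1)) (zetaSlope_mem_subdiffR (by omega) hleft)
    (zetaSlope_mem_subdiffR hm hright) ?_ ?_
  · rw [hleft, hcell (k := m) (by omega) le_rfl (hlt m).le, ← zetaPiece_eq_add]
  · rw [hright, hcell hm (hlt (m + 1)).le le_rfl, ← zetaPiece_eq_add]

theorem zeta_eventuallyEq_zetaPiece (hN : N ≠ 0) (hL : 0 ≤ L) (hR : 0 ≤ R) {k : ℕ}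
    (hk : k ≤ N) {x : ℝ} (hleft : k = 0 ∨ zetaKink N R k < x)
    (hright : k = N ∨ x < zetaKink N R (k + 1)) :
    zeta N L R =ᶠ[𝓝 x] zetaPiece N L R k := by
  have h₁ : ∀ᶠ y in 𝓝 x, k = 0 ∨ zetaKink N R k ≤ y := by
    rcases hleft with h | h
    · exact .of_forall fun _ => Or.inl h
    · exact (eventually_gt_nhds h).mono fun _ hy => Or.inr hy.le
  have h₂ : ∀ᶠ y in 𝓝 x, k = N ∨ y ≤ zetaKink N R (k + 1) := by
    rcases hright with h | h
    · exact .of_forall fun _ => Or.inl h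
    · exact (eventually_lt_nhds h).mono fun _ hy => Or.inr hy.le
  filter_upwards [h₁, h₂] with y hy₁ hy₂
  exact zeta_eq_zetaPiece hN hL hR hk hy₁ hy₂

end Zeta

/-- `ξ` is convex and `L`-Lipschitz; at `x_i = (2i/(N+1) - 1)R`,
`1 ≤ i ≤ N`, its subdifferential is `[(2(i-1)/N - 1)L, (2i/N - 1)L]`, and `ξ` is
differentiable at every other point of `ℝ`. -/
theorem zeta_properties (N : ℕ) (hN : 1 ≤ N) (L R : ℝ) (hL : 0 < L) (hR : 0 < R) :
    ConvexOn ℝ Set.univ (zeta N L R) ∧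
    LipschitzWith L.toNNReal (zeta N L R) ∧
    (∀ i : ℕ, 1 ≤ i → i ≤ N →
      subdiffR (zeta N L R) ((2 * (i : ℝ) / (N + 1) - 1) * R) =
        Set.Icc ((2 * ((i : ℝ) - 1) / N - 1) * L) ((2 * (i : ℝ) / N - 1) * L)) ∧
    (∀ x : ℝ, (∀ i : ℕ, 1 ≤ i → i ≤ N → x ≠ (2 * (i : ℝ) / (N + 1) - 1) * R) →
      DifferentiableAt ℝ (zeta N L R) x) := by
  have hN₀ : N ≠ 0 := by omega
  refine ⟨?_, ?_, fun i hi hiN => ?_, fun x hx => ?_⟩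
  · rw [zeta_eq_finset_sup']
    exact ConvexOn.finset_sup' _ fun j _ =>
      ((LinearMap.mulLeft ℝ (zetaSlope N L j)).convexOn convex_univ).add_const _
  · rw [zeta_eq_finset_sup']
    exact LipschitzWith.finset_sup' _ fun j hj => lipschitzWith_mul_add _ <|
      abs_zetaSlope_le hN₀ hL.le (Nat.lt_succ_iff.1 (Finset.mem_range.1 hj))
  · obtain ⟨m, rfl⟩ : ∃ m, i = m + 1 := ⟨i - 1, by omega⟩
    rw [show ((m + 1 : ℕ) : ℝ) - 1 = m by push_cast; ring]
    exact subdiffR_zeta_zetaKink hN₀ hL.le hR hiN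
  · obtain ⟨k, hk, hleft, hright⟩ := exists_cell_of_forall_ne (zetaKink N R) N hx
    rw [(zeta_eventuallyEq_zetaPiece hN₀ hL.le hR.le hk hleft hright).differentiableAt_iff]
    unfold zetaPiece
    fun_prop
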